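/- (Weak convergence of oscillating periodic functions.) Let f : ℝ³ → ℝ be a 𝒢-periodic locally integrable function, and for each natural number n define fₙ(x) = f(n x). Then for every continuous compactly supported function g : ℝ³ → ℝ one has ∫_{ℝ³} fₙ(x) g(x) dx → ( ⨍_Y f(y) dy ) ∫_{ℝ³} g(x) dx as n → ∞. -/

import Mathlib

open MeasureTheory

noncomputable section

/-- Classical partial derivative of `f` in the `j`-th coordinate direction. -/
def pd (j : Fin 3) (f : (Fin 3 → ℝ) → ℝ) (x : Fin 3 → ℝ) : ℝ :=
  fderiv ℝ f x (Pi.single j 1)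

/-- Symmetric part of the gradient of a vector field. -/
def symGrad (v : (Fin 3 → ℝ) → (Fin 3 → ℝ)) (x : Fin 3 → ℝ) :
    Matrix (Fin 3) (Fin 3) ℝ :=
  Matrix.of fun i j => (pd j (fun y => v y i) x + pd i (fun y => v y j) x) / 2

/-- Divergence of a matrix field: `(div μ)_i = Σ_j ∂_j μ_ij`. -/
def matDiv (μ : (Fin 3 → ℝ) → Matrix (Fin 3) (Fin 3) ℝ) (x : Fin 3 → ℝ) : Fin 3 → ℝ :=
  fun i => ∑ j, pd j (fun y => μ y i j) x

/-- Frobenius inner product of 3×3 matrices. -/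
def frob (a b : Matrix (Fin 3) (Fin 3) ℝ) : ℝ := ∑ i, ∑ j, a i j * b i j

/-- Levi-Civita symbol on `{1,2,3}`. -/
def levi (i j k : Fin 3) : ℝ :=
  Matrix.det (Matrix.of ![(Pi.single i 1 : Fin 3 → ℝ), Pi.single j 1, Pi.single k 1])

/-- `(CURL e)_ij = Σ_{l,k} ε_ilk ∂_l e_jk`. -/
def curlM (e : (Fin 3 → ℝ) → Matrix (Fin 3) (Fin 3) ℝ) (x : Fin 3 → ℝ) :
    Matrix (Fin 3) (Fin 3) ℝ :=
  Matrix.of fun i j => ∑ l, ∑ k, levi i l k * pd l (fun y => e y j k) x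

/-- Divergence of a vector field. -/
def divV (u : (Fin 3 → ℝ) → (Fin 3 → ℝ)) (x : Fin 3 → ℝ) : ℝ :=
  ∑ i, pd i (fun y => u y i) x

/-- Curl of a vector field. -/
def curlV (u : (Fin 3 → ℝ) → (Fin 3 → ℝ)) (x : Fin 3 → ℝ) : Fin 3 → ℝ :=
  fun i => ∑ j, ∑ k, levi i j k * pd j (fun y => u y k) x

/-- `𝒢`-periodicity with respect to the lattice generated by `gv 0, gv 1, gv 2`. -/
def GPeriodic {α : Type*} (gv : Fin 3 → (Fin 3 → ℝ)) (f : (Fin 3 → ℝ) → α) : Prop :=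
  ∀ x : Fin 3 → ℝ, ∀ i : Fin 3, f (x + gv i) = f x

/-- The periodicity cell `Y = {s₁g₁+s₂g₂+s₃g₃ : sᵢ ∈ [0,1]}`. -/
def cell (gv : Fin 3 → (Fin 3 → ℝ)) : Set (Fin 3 → ℝ) :=
  (fun s : Fin 3 → ℝ => ∑ i, s i • gv i) '' Set.Icc 0 1

/-!
Substituting `z = n • x` and cutting the space into lattice translates of the fundamental domain
`D`, periodicity of `f` turns `∫ f (n • x) * g x` into `∫_D f y * (n⁻ᵈ * ∑_γ g (n⁻¹ • (γ + y)))`.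
The inner expression is a Riemann sum of `g` on the shifted mesh `n⁻¹ • (γ + y)`, and it tends to
`(∫ g) / |D|` uniformly in `y ∈ D`: its average over `D` is exactly `(∫ g) / |D|`, and two of
these sums for `y, y' ∈ D` differ termwise by the modulus of continuity of `g` at scale
`diam D / n`, over at most `O(nᵈ)` nonzero terms.
-/

open Filter Topology Metric Module Submodule
open scoped Pointwise

theorem Function.Periodic.of_mem_span_int {M α ι : Type*} [AddCommGroup M] {f : M → α}
    {v : ι → M} (h : ∀ i, Function.Periodic f (v i)) {γ : M}
    (hγ : γ ∈ span ℤ (Set.range v)) : Function.Periodic f γ := by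
  induction hγ using Submodule.span_induction with
  | mem _ hx => obtain ⟨i, rfl⟩ := hx; exact h i
  | zero => exact fun x => by rw [add_zero]
  | add _ _ _ _ hx hy => exact hx.add_period hy
  | smul k _ _ hx => exact hx.zsmul k

theorem MeasureTheory.IsAddFundamentalDomain.card_mul_measure_le {G α : Type*} [AddGroup G]
    [AddAction G α] [MeasurableSpace α] [MeasurableConstVAdd G α] {μ : Measure α}
    [VAddInvariantMeasure G α μ] {s W : Set α} (h : IsAddFundamentalDomain G s μ)
    (T : Finset G) (hT : ∀ γ ∈ T, γ +ᵥ s ⊆ W) : T.card * μ s ≤ μ W :=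
  calc T.card * μ s = ∑ γ ∈ T, μ (γ +ᵥ s) := by simp [measure_vadd]
    _ = μ (⋃ γ ∈ T, γ +ᵥ s) :=
      (measure_biUnion_finset₀ (fun _ _ _ _ hne => h.aedisjoint hne)
        fun γ _ => h.nullMeasurableSet_vadd γ).symm
    _ ≤ μ W := measure_mono (Set.iUnion₂_subset hT)

theorem MeasureTheory.abs_sub_setAverage_le {α : Type*} [MeasurableSpace α] {μ : Measure α}
    {s : Set α} {f : α → ℝ} (hμ : μ s ≠ 0) (hμ₁ : μ s ≠ ⊤) (hf : IntegrableOn f s μ) {c : ℝ}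
    (hc : ∀ x ∈ s, ∀ y ∈ s, |f x - f y| ≤ c) {x : α} (hx : x ∈ s) :
    |f x - ⨍ a in s, f a ∂μ| ≤ c := by
  obtain ⟨y₁, hy₁, h₁⟩ := exists_le_setAverage hμ hμ₁ hf
  obtain ⟨y₂, hy₂, h₂⟩ := exists_setAverage_le hμ hμ₁ hf
  rw [abs_le]
  constructor <;> linarith [abs_le.1 (hc x hx y₁ hy₁), abs_le.1 (hc x hx y₂ hy₂)]

theorem MeasureTheory.IntegrableOn.tendsto_setIntegral_mul {α κ : Type*} [MeasurableSpace α]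
    {μ : Measure α} {s : Set α} {f : α → ℝ} (hf : IntegrableOn f s μ) (hs : MeasurableSet s)
    {l : Filter κ} [l.IsCountablyGenerated] {q : κ → α → ℝ} {c : ℝ}
    (hq_meas : ∀ k, AEStronglyMeasurable (q k) (μ.restrict s))
    (hq : TendstoUniformlyOn q (fun _ => c) l s) :
    Tendsto (fun k => ∫ x in s, f x * q k x ∂μ) l (𝓝 ((∫ x in s, f x ∂μ) * c)) := by
  rw [← integral_mul_const]
  refine tendsto_integral_filter_of_dominated_convergence (fun x => ‖f x‖ * (|c| + 1))
    (.of_forall fun k => hf.aestronglyMeasurable.mul (hq_meas k)) ?_ (hf.norm.mul_const _) ?_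
  · filter_upwards [Metric.tendstoUniformlyOn_iff.1 hq 1 one_pos] with k hk
    filter_upwards [ae_restrict_mem hs] with x hx
    rw [norm_mul, Real.norm_eq_abs (q k x)]
    gcongr
    have := hk x hx
    rw [Real.dist_eq] at this
    linarith [abs_sub_abs_le_abs_sub (q k x) c, abs_sub_comm c (q k x)]
  · filter_upwards [ae_restrict_mem hs] with x hx
    exact (hq.tendsto_at hx).const_mul (f x)

theorem support_comp_inv_smul_subset_closedBall {E : Type*} [NormedAddCommGroup E]
    [NormedSpace ℝ E] {g : E → ℝ} {R t : ℝ} (hR : Function.support g ⊆ closedBall 0 R)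
    (ht : 0 < t) : Function.support (fun z => g (t⁻¹ • z)) ⊆ closedBall 0 (t * R) := by
  rw [support_comp_inv_smul₀ ht.ne']
  calc t • Function.support g ⊆ t • closedBall 0 R := Set.smul_set_mono hR
    _ = closedBall 0 (t * R) := by
      rw [smul_closedBall' ht.ne', smul_zero, Real.norm_of_nonneg ht.le]

namespace ZSpan

variable {E ι : Type*} [NormedAddCommGroup E] [NormedSpace ℝ E] [Fintype ι] (b : Basis ι ℝ E)

theorem norm_le_of_mem_fundamentalDomain {y : E} (hy : y ∈ fundamentalDomain b) :
    ‖y‖ ≤ ∑ i, ‖b i‖ := by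
  simpa [fract_eq_self.2 hy] using norm_fract_le b y

variable [FiniteDimensional ℝ E]

def latticeBall (r : ℝ) : Finset (span ℤ (Set.range b)) :=
  ((setFinite_inter b (isBounded_closedBall (x := (0 : E)) (r := r))).preimage
    Subtype.coe_injective.injOn).toFinset

theorem mem_latticeBall {r : ℝ} {γ : span ℤ (Set.range b)} :
    γ ∈ latticeBall b r ↔ ‖(γ : E)‖ ≤ r := by
  simp [latticeBall]

/-- `∑_γ g (t⁻¹ • (γ + y))` over the lattice, truncated to the vectors `γ` that can contribute
for `y ∈ fundamentalDomain b` when `support g ⊆ closedBall 0 R`. -/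
def scaledPeriodization (g : E → ℝ) (R t : ℝ) (y : E) : ℝ :=
  ∑ γ ∈ latticeBall b (t * R + ∑ i, ‖b i‖), g (t⁻¹ • (γ + y))

variable {b}

theorem apply_add_eq_zero_of_notMem_latticeBall {ψ : E → ℝ} {R : ℝ}
    (hR : Function.support ψ ⊆ closedBall 0 R) {γ : span ℤ (Set.range b)}
    (hγ : γ ∉ latticeBall b (R + ∑ i, ‖b i‖)) {y : E} (hy : y ∈ fundamentalDomain b) :
    ψ (γ + y) = 0 := by
  by_contra hne
  refine hγ ((mem_latticeBall b).2 ?_)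
  have hγy : ‖(γ : E) + y‖ ≤ R := mem_closedBall_zero_iff.1 (hR hne)
  calc ‖(γ : E)‖ = ‖((γ : E) + y) - y‖ := by rw [add_sub_cancel_right]
    _ ≤ ‖(γ : E) + y‖ + ‖y‖ := norm_sub_le _ _
    _ ≤ R + ∑ i, ‖b i‖ := add_le_add hγy (norm_le_of_mem_fundamentalDomain b hy)

theorem continuous_scaledPeriodization {g : E → ℝ} (hg : Continuous g) (R t : ℝ) :
    Continuous (scaledPeriodization b g R t) :=
  continuous_finsetSum _ fun _ _ => hg.comp ((continuous_const_add _).const_smul _)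

theorem abs_scaledPeriodization_sub_le {g : E → ℝ} {R ε δ t : ℝ} (ht : 0 < t)
    (htδ : 2 * ∑ i, ‖b i‖ < t * δ) (hgδ : ∀ z z', dist z z' < δ → dist (g z) (g z') < ε)
    {y y' : E} (hy : y ∈ fundamentalDomain b) (hy' : y' ∈ fundamentalDomain b) :
    |scaledPeriodization b g R t y - scaledPeriodization b g R t y'| ≤
      (latticeBall b (t * R + ∑ i, ‖b i‖)).card * ε := by
  have hclose (γ : E) : dist (t⁻¹ • (γ + y)) (t⁻¹ • (γ + y')) < δ := by
    rw [dist_smul₀, dist_add_left, Real.norm_of_nonneg (inv_nonneg.2 ht.le), inv_mul_lt_iff₀ ht]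
    calc dist y y' ≤ ‖y‖ + ‖y'‖ := dist_le_norm_add_norm y y'
      _ ≤ 2 * ∑ i, ‖b i‖ := by
        linarith [norm_le_of_mem_fundamentalDomain b hy, norm_le_of_mem_fundamentalDomain b hy']
      _ < t * δ := htδ
  rw [scaledPeriodization, scaledPeriodization, ← Finset.sum_sub_distrib, ← nsmul_eq_mul]
  refine (Finset.abs_sum_le_sum_abs _ _).trans (Finset.sum_le_card_nsmul _ _ _ fun γ _ => ?_)
  exact (hgδ _ _ (hclose γ)).le

variable [MeasurableSpace E]

theorem integrableOn_fundamentalDomain {F : Type*} [NormedAddCommGroup F] {μ : Measure E}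
    {f : E → F} (hf : LocallyIntegrable f μ) : IntegrableOn f (fundamentalDomain b) μ :=
  (hf.integrableOn_isCompact (fundamentalDomain_isBounded b).isCompact_closure).mono_set
    subset_closure

variable [BorelSpace E] (μ : Measure E) [μ.IsAddHaarMeasure]

-- Mathlib registers this instance only for `(span ℤ (Set.range b)).toAddSubgroup`.
instance : VAddInvariantMeasure (span ℤ (Set.range b)) E μ :=
  inferInstanceAs (VAddInvariantMeasure (span ℤ (Set.range b)).toAddSubgroup E μ)

theorem card_latticeBall_mul_le {r : ℝ} (hr : 0 ≤ r) :
    (latticeBall b r).card * μ.real (fundamentalDomain b) ≤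
      (r + ∑ i, ‖b i‖) ^ finrank ℝ E * μ.real (closedBall 0 1) := by
  have hρ : 0 ≤ ∑ i, ‖b i‖ := by positivity
  rw [← Measure.addHaar_real_closedBall' μ 0 (add_nonneg hr hρ)]
  have h := (ZSpan.isAddFundamentalDomain b μ).card_mul_measure_le (W := closedBall 0 _)
    (latticeBall b r) fun γ hγ => by
      rintro _ ⟨y, hy, rfl⟩
      rw [mem_closedBall_zero_iff]
      exact (norm_add_le _ _).trans (add_le_add ((mem_latticeBall b).1 hγ)
        (norm_le_of_mem_fundamentalDomain b hy))
  simpa [measureReal_def] using ENNReal.toReal_mono measure_closedBall_lt_top.ne h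

theorem card_latticeBall_le {R t : ℝ} (hR : 0 ≤ R) (ht : 1 ≤ t) :
    ((latticeBall b (t * R + ∑ i, ‖b i‖)).card : ℝ) ≤ t ^ finrank ℝ E *
      ((R + 2 * ∑ i, ‖b i‖) ^ finrank ℝ E * μ.real (closedBall 0 1) /
        μ.real (fundamentalDomain b)) := by
  have hm : 0 < μ.real (fundamentalDomain b) := ENNReal.toReal_pos
    (measure_fundamentalDomain_ne_zero b) (fundamentalDomain_isBounded b).measure_lt_top.ne
  have hρ : 0 ≤ ∑ i, ‖b i‖ := by positivity
  rw [mul_div_assoc', le_div_iff₀ hm]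
  refine (card_latticeBall_mul_le μ (by positivity)).trans ?_
  rw [← mul_assoc, ← mul_pow]
  gcongr
  nlinarith

variable {μ} in
theorem integral_mul_eq_setIntegral_mul_sum {f ψ : E → ℝ} (hf : LocallyIntegrable f μ)
    (hper : ∀ γ ∈ span ℤ (Set.range b), Function.Periodic f γ) (hψ : Continuous ψ) {R : ℝ}
    (hR : Function.support ψ ⊆ closedBall 0 R) :
    ∫ x, f x * ψ x ∂μ = ∫ y in fundamentalDomain b,
      f y * ∑ γ ∈ latticeBall b (R + ∑ i, ‖b i‖), ψ (γ + y) ∂μ := by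
  set T := latticeBall b (R + ∑ i, ‖b i‖)
  have hψc : HasCompactSupport ψ :=
    (isCompact_closedBall 0 R).of_isClosed_subset (isClosed_tsupport _)
      (closure_minimal hR isClosed_closedBall)
  obtain ⟨C, hC⟩ := hψc.exists_bound_of_continuous hψ
  have hterm (γ : span ℤ (Set.range b)) :
      IntegrableOn (fun y => f y * ψ (γ + y)) (fundamentalDomain b) μ :=
    (integrableOn_fundamentalDomain hf).mul_bdd
      (hψ.comp (continuous_const_add _)).aestronglyMeasurable (ae_of_all _ fun _ => hC _)
  calc ∫ x, f x * ψ x ∂μ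
      = ∑' γ : span ℤ (Set.range b), ∫ y in fundamentalDomain b, f (γ + y) * ψ (γ + y) ∂μ :=
        (ZSpan.isAddFundamentalDomain b μ).integral_eq_tsum'' _
          (by simpa [mul_comm] using hf.integrable_smul_left_of_hasCompactSupport hψ hψc)
    _ = ∑ γ ∈ T, ∫ y in fundamentalDomain b, f (γ + y) * ψ (γ + y) ∂μ :=
        tsum_eq_sum fun γ hγ => setIntegral_eq_zero_of_forall_eq_zero fun y hy => by
          rw [apply_add_eq_zero_of_notMem_latticeBall hR hγ hy, mul_zero]
    _ = ∑ γ ∈ T, ∫ y in fundamentalDomain b, f y * ψ (γ + y) ∂μ := by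
        have hfγ (γ : span ℤ (Set.range b)) (y : E) : f (γ + y) = f y := by
          rw [add_comm]; exact hper γ γ.2 y
        simp only [hfγ]
    _ = _ := by
        simp_rw [Finset.mul_sum]
        exact (integral_finsetSum T fun γ _ => hterm γ).symm

theorem setAverage_scaledPeriodization {g : E → ℝ} (hg : Continuous g) {R t : ℝ}
    (hR : Function.support g ⊆ closedBall 0 R) (ht : 0 < t) :
    ⨍ y in fundamentalDomain b, scaledPeriodization b g R t y ∂μ =
      t ^ finrank ℝ E * (∫ x, g x ∂μ) / μ.real (fundamentalDomain b) := by
  have h := integral_mul_eq_setIntegral_mul_sum (b := b) (μ := μ) (f := fun _ => (1 : ℝ))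
    (ψ := fun z => g (t⁻¹ • z)) (locallyIntegrable_const 1) (fun _ _ _ => rfl)
    (hg.comp (continuous_const_smul t⁻¹)) (support_comp_inv_smul_subset_closedBall hR ht)
  simp only [one_mul] at h
  unfold scaledPeriodization
  rw [setAverage_eq, smul_eq_mul, ← h, Measure.integral_comp_inv_smul, smul_eq_mul,
    abs_of_pos (by positivity), inv_mul_eq_div]

theorem abs_scaledPeriodization_sub_integral_le {g : E → ℝ} (hg : Continuous g) {R ε δ t : ℝ}
    (hR : Function.support g ⊆ closedBall 0 R) (ht : 0 < t)
    (htδ : 2 * ∑ i, ‖b i‖ < t * δ) (hgδ : ∀ z z', dist z z' < δ → dist (g z) (g z') < ε)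
    {y : E} (hy : y ∈ fundamentalDomain b) :
    |scaledPeriodization b g R t y -
        t ^ finrank ℝ E * (∫ x, g x ∂μ) / μ.real (fundamentalDomain b)| ≤
      (latticeBall b (t * R + ∑ i, ‖b i‖)).card * ε := by
  rw [← setAverage_scaledPeriodization μ hg hR ht]
  exact abs_sub_setAverage_le (measure_fundamentalDomain_ne_zero b)
    (fundamentalDomain_isBounded b).measure_lt_top.ne
    (integrableOn_fundamentalDomain (continuous_scaledPeriodization hg R t).locallyIntegrable)
    (fun _ hx _ hx' => abs_scaledPeriodization_sub_le ht htδ hgδ hx hx') hy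

theorem tendstoUniformlyOn_scaledPeriodization {g : E → ℝ} (hg : Continuous g) {R : ℝ}
    (hR : Function.support g ⊆ closedBall 0 R) (hR0 : 0 ≤ R) :
    TendstoUniformlyOn (fun (n : ℕ) y => ((n : ℝ) ^ finrank ℝ E)⁻¹ * scaledPeriodization b g R n y)
      (fun _ => (∫ x, g x ∂μ) / μ.real (fundamentalDomain b)) atTop (fundamentalDomain b) := by
  set K := (R + 2 * ∑ i, ‖b i‖) ^ finrank ℝ E * μ.real (closedBall (0 : E) 1) /
    μ.real (fundamentalDomain b)
  have hK : 0 ≤ K := by positivity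
  have hgc : HasCompactSupport g :=
    (isCompact_closedBall 0 R).of_isClosed_subset (isClosed_tsupport _)
      (closure_minimal hR isClosed_closedBall)
  rw [Metric.tendstoUniformlyOn_iff]
  intro ε hε
  obtain ⟨δ, hδ, hgδ⟩ := Metric.uniformContinuous_iff.1 (hgc.uniformContinuous_of_continuous hg)
    (ε / (K + 1)) (by positivity)
  obtain ⟨N, hN⟩ := exists_nat_gt ((2 * ∑ i, ‖b i‖) / δ)
  filter_upwards [eventually_ge_atTop (max N 1)] with n hn y hy
  have hn1 : (1 : ℝ) ≤ n := by exact_mod_cast (le_max_right N 1).trans hn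
  have hnd : (0 : ℝ) < (n : ℝ) ^ finrank ℝ E := by positivity
  have hnδ : 2 * ∑ i, ‖b i‖ < n * δ := by
    rw [← div_lt_iff₀ hδ]
    exact hN.trans_le (Nat.cast_le.2 ((le_max_left N 1).trans hn))
  have hest := abs_scaledPeriodization_sub_integral_le μ hg hR (by positivity) hnδ hgδ hy
  calc dist ((∫ x, g x ∂μ) / μ.real (fundamentalDomain b))
        (((n : ℝ) ^ finrank ℝ E)⁻¹ * scaledPeriodization b g R n y)
      = ((n : ℝ) ^ finrank ℝ E)⁻¹ * |scaledPeriodization b g R n y -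
          (n : ℝ) ^ finrank ℝ E * (∫ x, g x ∂μ) / μ.real (fundamentalDomain b)| := by
        rw [dist_comm, Real.dist_eq, ← abs_of_pos (inv_pos.2 hnd), ← abs_mul, mul_sub,
          mul_div_assoc, inv_mul_cancel_left₀ hnd.ne', abs_of_pos (inv_pos.2 hnd)]
    _ ≤ ((n : ℝ) ^ finrank ℝ E)⁻¹ * ((n : ℝ) ^ finrank ℝ E * K * (ε / (K + 1))) := by
        gcongr
        exact hest.trans (by gcongr; exact card_latticeBall_le μ hR0 hn1)
    _ = K * (ε / (K + 1)) := by field_simp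
    _ < ε := by
        rw [mul_div_assoc', div_lt_iff₀ (by positivity)]
        nlinarith

theorem integral_comp_smul_mul_eq {f g : E → ℝ} (hf : LocallyIntegrable f μ)
    (hper : ∀ γ ∈ span ℤ (Set.range b), Function.Periodic f γ) (hg : Continuous g) {R t : ℝ}
    (hR : Function.support g ⊆ closedBall 0 R) (ht : 0 < t) :
    ∫ x, f (t • x) * g x ∂μ = ∫ y in fundamentalDomain b,
      f y * ((t ^ finrank ℝ E)⁻¹ * scaledPeriodization b g R t y) ∂μ := by
  have h := Measure.integral_comp_smul μ (fun z => f z * g (t⁻¹ • z)) t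
  simp only [smul_smul, inv_mul_cancel₀ ht.ne', one_smul] at h
  rw [h, integral_mul_eq_setIntegral_mul_sum (ψ := fun z => g (t⁻¹ • z)) hf hper
      (hg.comp (continuous_const_smul t⁻¹)) (support_comp_inv_smul_subset_closedBall hR ht),
    abs_of_pos (by positivity), smul_eq_mul, ← integral_const_mul]
  simp only [scaledPeriodization, mul_left_comm, smul_add]

theorem tendsto_integral_comp_smul_mul {f g : E → ℝ} (hf : LocallyIntegrable f μ)
    (hper : ∀ γ ∈ span ℤ (Set.range b), Function.Periodic f γ) (hg : Continuous g)
    (hgc : HasCompactSupport g) :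
    Tendsto (fun n : ℕ => ∫ x, f ((n : ℝ) • x) * g x ∂μ) atTop
      (𝓝 ((⨍ y in fundamentalDomain b, f y ∂μ) * ∫ x, g x ∂μ)) := by
  obtain ⟨R, hR⟩ := hgc.isBounded.subset_closedBall 0
  have hR' : Function.support g ⊆ closedBall 0 (max R 0) :=
    (subset_tsupport g).trans (hR.trans (closedBall_subset_closedBall (le_max_left R 0)))
  have hlim := (integrableOn_fundamentalDomain hf).tendsto_setIntegral_mul
    (fundamentalDomain_measurableSet b) (fun _ => ((continuous_scaledPeriodization hg _ _).const_mul _).aestronglyMeasurable)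
    (tendstoUniformlyOn_scaledPeriodization μ hg hR' (le_max_right R 0))
  rw [show (⨍ y in fundamentalDomain b, f y ∂μ) * ∫ x, g x ∂μ =
      (∫ y in fundamentalDomain b, f y ∂μ) * ((∫ x, g x ∂μ) / μ.real (fundamentalDomain b)) by
    rw [setAverage_eq, smul_eq_mul]; ring]
  refine hlim.congr' ?_
  filter_upwards [eventually_gt_atTop 0] with n hn
  exact (integral_comp_smul_mul_eq μ hf hper hg hR' (Nat.cast_pos.2 hn)).symm

end ZSpan

open Filter Topology in
/-- **Weak convergence of oscillating periodic functions**: if `f` is `𝒢`-periodic and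
locally integrable and `fₙ(x) = f(nx)`, then `∫ fₙ g → (⨍_Y f) ∫ g` for every continuous
compactly supported `g`. -/
theorem oscillating_weak_convergence (gv : Fin 3 → (Fin 3 → ℝ))
    (hgv : LinearIndependent ℝ gv)
    (f : (Fin 3 → ℝ) → ℝ) (hfint : LocallyIntegrable f) (hfper : GPeriodic gv f) :
    ∀ g : (Fin 3 → ℝ) → ℝ, Continuous g → HasCompactSupport g →
      Tendsto (fun n : ℕ => ∫ x, f ((n : ℝ) • x) * g x) atTop
        (𝓝 ((⨍ y in cell gv, f y) * ∫ x, g x)) := by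
  intro g hg hgc
  set b := basisOfLinearIndependentOfCardEqFinrank hgv (by simp)
  have hb : ⇑b = gv := coe_basisOfLinearIndependentOfCardEqFinrank hgv _
  have hcell : cell gv =ᵐ[volume] ZSpan.fundamentalDomain b := by
    rw [← hb]
    exact (ZSpan.fundamentalDomain_ae_parallelepiped b volume).symm
  rw [setAverage_congr hcell]
  refine ZSpan.tendsto_integral_comp_smul_mul volume hfint (fun γ hγ => ?_) hg hgc
  rw [hb] at hγ
  exact Function.Periodic.of_mem_span_int (fun i x => hfper x i) hγ

end
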